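/- Kalimullin pair distributivity: let A₀, A₁, B ⊆ ℕ with A₀ and A₁ nonempty. Then the following are equivalent: (1) both (A₀,B) and (A₁,B) are Kalimullin pairs; (2) (A₀ ⊕ A₁, B) is a Kalimullin pair, where A₀ ⊕ A₁ = {2a : a ∈ A₀} ∪ {2a+1 : a ∈ A₁}; (3) (A₀ × A₁, B) is a Kalimullin pair (viewing A₀ × A₁ ⊆ ℕ via a computable pairing bijection ℕ × ℕ → ℕ). -/

import Mathlib

/-- Canonical computable coding of finite subsets of ℕ. -/
def Kfin (x : ℕ) : Finset ℕ := Denumerable.ofNat (Finset ℕ) x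

/-- `s` is a selector function for the set `S`. -/
def Selector (S : Set ℕ) (s : ℕ → ℕ → ℕ) : Prop :=
  (∀ x y, s x y = x ∨ s x y = y) ∧ ∀ x y, (x ∈ S ∨ y ∈ S) → s x y ∈ S

/-- A set is semicomputable iff it has a total computable selector function. -/
def SemiComputable (S : Set ℕ) : Prop :=
  ∃ s : ℕ → ℕ → ℕ, Computable₂ s ∧ Selector S s

/-- Computable join of two sets of naturals. -/
def join (A B : Set ℕ) : Set ℕ :=
  {n | ∃ a ∈ A, n = 2 * a} ∪ {n | ∃ b ∈ B, n = 2 * b + 1}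

/-- Enumeration reducibility on subsets of ℕ. -/
def EnumReducible (A B : Set ℕ) : Prop :=
  ∃ Φ : Set (ℕ × ℕ), REPred (· ∈ Φ) ∧
    ∀ x, x ∈ A ↔ ∃ d, (x, d) ∈ Φ ∧ (↑(Kfin d) : Set ℕ) ⊆ B

/-- A Kalimullin pair with a c.e. witness. -/
def KPair (A B : Set ℕ) : Prop :=
  ∃ W : Set (ℕ × ℕ), REPred (· ∈ W) ∧
    (∀ a ∈ A, ∀ b ∈ B, (a, b) ∈ W) ∧ (∀ a ∉ A, ∀ b ∉ B, (a, b) ∉ W)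

/-- The binary (strict) ordering on subsets of ℕ. -/
def bLt (A B : Set ℕ) : Prop :=
  ∃ β : ℕ, β ∉ A ∧ β ∈ B ∧ ∀ x < β, (x ∈ A ↔ x ∈ B)

/-- The binary (non-strict) ordering on subsets of ℕ. -/
def bLe (A B : Set ℕ) : Prop := bLt A B ∨ A = B

/-!
For a fixed `B`, the sets `A` forming a Kalimullin pair with `B` contain every computable set and
are closed under computable preimages, binary unions and binary intersections (take the preimage,
union or intersection of the c.e. witnesses). The join and the product of `A₀` and `A₁` are built
from computable preimages of `A₀`, `A₁` and computable sets by these operations. Conversely `A₀`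
and `A₁` are computable preimages of their join, and also of their product once an element of the
other factor is fixed, which is where nonemptiness enters.
-/

namespace REPred

variable {α β : Type*} [Primcodable α] [Primcodable β] {p q : α → Prop}

theorem comp {p : β → Prop} (hp : REPred p) {f : α → β} (hf : Computable f) :
    REPred fun a => p (f a) :=
  Partrec.comp hp hf

theorem and (hp : REPred p) (hq : REPred q) : REPred fun a => p a ∧ q a :=
  have h : Partrec fun a => (Part.assert (p a) fun _ => Part.some ()).bind fun _ =>
      Part.assert (q a) fun _ => Part.some () :=
    Partrec.bind hp (Partrec.comp hq Computable.fst)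
  h.dom_re.of_eq fun a => by simp [Part.assert]

theorem or (hp : REPred p) (hq : REPred q) : REPred fun a => p a ∨ q a := by
  obtain ⟨k, hk, hdom⟩ := Partrec.merge' hp hq
  exact hk.dom_re.of_eq fun a => by simp [(hdom a).2, Part.assert]

end REPred

namespace KPair

variable {A A' B : Set ℕ}

theorem of_computablePred (hA : ComputablePred (· ∈ A)) (B : Set ℕ) : KPair A B :=
  ⟨{w | w.1 ∈ A}, hA.to_re.comp Computable.fst, fun _ ha _ _ => ha, fun _ ha _ _ => ha⟩

theorem preimage (h : KPair A B) {f : ℕ → ℕ} (hf : Computable f) : KPair (f ⁻¹' A) B := by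
  obtain ⟨W, hW, hin, hout⟩ := h
  exact ⟨{w | (f w.1, w.2) ∈ W}, hW.comp ((hf.comp Computable.fst).pair Computable.snd),
    fun a ha b hb => hin _ ha b hb, fun a ha b hb => hout _ ha b hb⟩

theorem inter (h : KPair A B) (h' : KPair A' B) : KPair (A ∩ A') B := by
  obtain ⟨W, hW, hin, hout⟩ := h
  obtain ⟨W', hW', hin', hout'⟩ := h'
  refine ⟨W ∩ W', hW.and hW', fun a ha b hb => ⟨hin a ha.1 b hb, hin' a ha.2 b hb⟩, ?_⟩
  rintro a ha b hb ⟨hw, hw'⟩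
  rcases not_and_or.1 ha with ha | ha
  exacts [hout a ha b hb hw, hout' a ha b hb hw']

theorem union (h : KPair A B) (h' : KPair A' B) : KPair (A ∪ A') B := by
  obtain ⟨W, hW, hin, hout⟩ := h
  obtain ⟨W', hW', hin', hout'⟩ := h'
  refine ⟨W ∪ W', hW.or hW', ?_, ?_⟩
  · rintro a (ha | ha) b hb
    exacts [Or.inl (hin a ha b hb), Or.inr (hin' a ha b hb)]
  · rintro a ha b hb (hw | hw)
    exacts [hout a (fun h => ha (Or.inl h)) b hb hw, hout' a (fun h => ha (Or.inr h)) b hb hw]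

end KPair

theorem join_eq (A0 A1 : Set ℕ) :
    join A0 A1 = {n | n % 2 = 0} ∩ (· / 2) ⁻¹' A0 ∪ {n | n % 2 = 1} ∩ (· / 2) ⁻¹' A1 := by
  ext n
  simp only [join, Set.mem_union, Set.mem_inter_iff, Set.mem_ofPred_eq, Set.mem_preimage]
  constructor
  · rintro (⟨a, ha, rfl⟩ | ⟨a, ha, rfl⟩)
    · exact Or.inl ⟨by omega, by rwa [Nat.mul_div_cancel_left a two_pos]⟩
    · exact Or.inr ⟨by omega, by rwa [show (2 * a + 1) / 2 = a by omega]⟩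
  · rintro (⟨hn, ha⟩ | ⟨hn, ha⟩)
    exacts [Or.inl ⟨_, ha, by omega⟩, Or.inr ⟨_, ha, by omega⟩]

theorem preimage_two_mul_join (A0 A1 : Set ℕ) : (2 * ·) ⁻¹' join A0 A1 = A0 := by
  ext a
  simp [join_eq]

theorem preimage_two_mul_add_one_join (A0 A1 : Set ℕ) : (2 * · + 1) ⁻¹' join A0 A1 = A1 := by
  ext a
  have : (2 * a + 1) / 2 = a := by omega
  simp [join_eq, this, Nat.add_mod]

namespace KPair

variable {A0 A1 B : Set ℕ}

theorem join_of_kpair (h0 : KPair A0 B) (h1 : KPair A1 B) : KPair (join A0 A1) B := by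
  have hHalf : Computable (· / 2 : ℕ → ℕ) := (Primrec.nat_div.comp .id (.const 2)).to_comp
  have hParity (r : ℕ) : ComputablePred fun n : ℕ => n % 2 = r :=
    (Primrec.eq.comp (Primrec.nat_mod.comp .id (.const 2)) (.const r)).computablePred
  rw [join_eq]
  exact ((of_computablePred (hParity 0) B).inter (h0.preimage hHalf)).union
    ((of_computablePred (hParity 1) B).inter (h1.preimage hHalf))

theorem join_iff : KPair (join A0 A1) B ↔ KPair A0 B ∧ KPair A1 B := by
  refine ⟨fun h => ⟨?_, ?_⟩, fun h => join_of_kpair h.1 h.2⟩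
  · simpa only [preimage_two_mul_join] using
      h.preimage (f := (2 * ·)) (Primrec.nat_mul.comp (.const 2) .id).to_comp
  · simpa only [preimage_two_mul_add_one_join] using h.preimage (f := (2 * · + 1))
      (Primrec.succ.comp (Primrec.nat_mul.comp (.const 2) .id)).to_comp

theorem unpair_iff (h0 : A0.Nonempty) (h1 : A1.Nonempty) :
    KPair {n | n.unpair.1 ∈ A0 ∧ n.unpair.2 ∈ A1} B ↔ KPair A0 B ∧ KPair A1 B := by
  obtain ⟨a0, ha0⟩ := h0
  obtain ⟨a1, ha1⟩ := h1
  refine ⟨fun h => ⟨?_, ?_⟩, fun h => ?_⟩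
  · simpa [ha1] using h.preimage (f := (Nat.pair · a1))
      (Primrec₂.natPair.comp .id (.const a1)).to_comp
  · simpa [ha0] using h.preimage (f := Nat.pair a0)
      (Primrec₂.natPair.comp (.const a0) .id).to_comp
  · exact (h.1.preimage (Primrec.fst.comp Primrec.unpair).to_comp).inter
      (h.2.preimage (Primrec.snd.comp Primrec.unpair).to_comp)

end KPair

theorem kpair_distributivity (A0 A1 B : Set ℕ) (h0 : A0.Nonempty) (h1 : A1.Nonempty) :
    ((KPair A0 B ∧ KPair A1 B) ↔ KPair (join A0 A1) B) ∧
    ((KPair A0 B ∧ KPair A1 B) ↔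
      KPair {n : ℕ | n.unpair.1 ∈ A0 ∧ n.unpair.2 ∈ A1} B) :=
  ⟨KPair.join_iff.symm, (KPair.unpair_iff h0 h1).symm⟩
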